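/- arXiv:1510.08240 — 2 statements merged into one kernel-verified Lean document; each statement's English description precedes it below -/
import Mathlib

section
/- If g : ℤ/Lℤ → ℂ is a window with K_g := (1/b)·min over t ∈ {0,…,M−1} of ∑_{k=0}^{b−1} |g[t+kM]|² > 0, where L = Mb, then for every x ∈ ℂ^M, with h[t] := (1/L)·(∑_{m=0}^{M−1} x[m] e^{2πi m t/M}) g[t], one has L·‖h‖² ≥ (1/b)·min_{u∈{0,…,M−1}} (∑_{k=0}^{b−1} |g[u−kM]|²) · ‖x‖². -/
/-!
Write `t ∈ ℤ/Lℤ` uniquely as `t = u - k M` with `u < M`, `k < b`. The trigonometric polynomial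
`P t = ∑ₘ x m e^{2πimt/M}` only depends on `t mod M = u`, so
`L ‖h‖² = (1/L) ∑ᵤ |P u|² ∑ₖ |g (u - k M)|²`. Bounding each inner sum below by the minimum over `u`
and using Parseval `∑ᵤ |P u|² = M ‖x‖²` (orthogonality of the characters of `ℤ/Mℤ`) gives the claim.
-/

open Complex Finset ComplexConjugate

namespace ZMod

section

variable {M : ℕ} [NeZero M]

lemma coe_finEquiv : ⇑(finEquiv M) = fun u : Fin M => ((u : ℕ) : ZMod M) := by
  obtain ⟨n, rfl⟩ : ∃ n, M = n + 1 := Nat.exists_eq_succ_of_ne_zero (NeZero.ne M)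
  exact funext fun u => (Fin.cast_val_eq_self u).symm

lemma injective_fin_natCast : Function.Injective fun u : Fin M => ((u : ℕ) : ZMod M) :=
  coe_finEquiv (M := M) ▸ (finEquiv M).injective

lemma sum_fin_natCast {α : Type*} [AddCommMonoid α] (f : ZMod M → α) :
    ∑ u : Fin M, f (u : ℕ) = ∑ v, f v :=
  Fintype.sum_equiv (finEquiv M).toEquiv _ _ fun u => congrArg f (congrFun coe_finEquiv u).symm

lemma exp_eq_stdAddChar (m t : ℕ) :
    exp (2 * Real.pi * I * m * t / M) = stdAddChar ((m : ZMod M) * (t : ZMod M)) := by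
  simpa [mul_assoc] using (stdAddChar_coe (N := M) (m * t : ℕ)).symm

end

variable {M b : ℕ} [NeZero (M * b)]

lemma natCast_val_natCast_sub_natCast_mul (u k : ℕ) :
    ((((u : ZMod (M * b)) - k * M).val : ℕ) : ZMod M) = u := by
  rw [natCast_val, ← castHom_apply (h := dvd_mul_right M b), map_sub, map_mul, map_natCast,
    map_natCast, map_natCast, natCast_self, mul_zero, sub_zero]

lemma sum_eq_sum_fin_sum_fin_natCast_sub_natCast_mul {α : Type*} [AddCommMonoid α]
    (f : ZMod (M * b) → α) :
    ∑ t, f t = ∑ u : Fin M, ∑ k : Fin b, f ((u : ℕ) - (k : ℕ) * M) := by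
  have : NeZero M := ⟨left_ne_zero_of_mul (NeZero.ne (M * b))⟩
  let e : Fin M × Fin b → ZMod (M * b) := fun p => (p.1 : ℕ) - (p.2 : ℕ) * M
  have he : e.Injective := by
    rintro ⟨u, k⟩ ⟨u', k'⟩ hek
    have hu : u = u' := injective_fin_natCast <| by
      simpa only [e, natCast_val_natCast_sub_natCast_mul] using
        congrArg (fun t : ZMod (M * b) => ((t.val : ℕ) : ZMod M)) hek
    subst hu
    have hkM : ((k * M : ℕ) : ZMod (M * b)) = ((k' * M : ℕ) : ZMod (M * b)) := by
      push_cast; simpa [e] using hek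
    have hlt : ∀ j : Fin b, (j : ℕ) * M < M * b := fun j => by
      rw [mul_comm]; exact Nat.mul_lt_mul_of_pos_left j.isLt (Nat.pos_of_neZero M)
    rw [natCast_eq_natCast_iff', Nat.mod_eq_of_lt (hlt k), Nat.mod_eq_of_lt (hlt k')] at hkM
    simp [Fin.ext (Nat.eq_of_mul_eq_mul_right (Nat.pos_of_neZero M) hkM)]
  have hbij : e.Bijective := (Fintype.bijective_iff_injective_and_card e).mpr
    ⟨he, by simp [ZMod.card]⟩
  rw [← Fintype.sum_prod_type', ← hbij.sum_comp]

end ZMod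

namespace AddChar

variable {R : Type*} [CommRing R] [Fintype R] [DecidableEq R] {ψ : AddChar R ℂ}

lemma sum_apply_mul_mul_conj_apply_mul (hψ : ψ.IsPrimitive) (a b : R) :
    ∑ v, ψ (a * v) * conj (ψ (b * v)) = if a = b then (Fintype.card R : ℂ) else 0 := by
  simp_rw [← map_neg_eq_conj, ← map_add_eq_mul, ← neg_mul, ← add_mul, mul_comm _ (_ : R)]
  rw [sum_mulShift _ hψ]
  simp [add_neg_eq_zero]

lemma sum_norm_sq_sum_mul_apply_mul (hψ : ψ.IsPrimitive) {ι : Type*} [Fintype ι] {e : ι → R}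
    (he : Function.Injective e) (x : ι → ℂ) :
    ∑ v, ‖∑ m, x m * ψ (e m * v)‖ ^ 2 = Fintype.card R * ∑ m, ‖x m‖ ^ 2 := by
  classical
  suffices h : ∑ v, (∑ m, x m * ψ (e m * v)) * conj (∑ n, x n * ψ (e n * v)) =
      Fintype.card R * ∑ m, x m * conj (x m) by
    simp_rw [mul_conj'] at h
    exact_mod_cast h
  calc ∑ v, (∑ m, x m * ψ (e m * v)) * conj (∑ n, x n * ψ (e n * v))
      = ∑ m, ∑ n, x m * conj (x n) * ∑ v, ψ (e m * v) * conj (ψ (e n * v)) := by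
        simp_rw [map_sum, map_mul, sum_mul_sum, mul_sum]
        rw [sum_comm]
        refine sum_congr rfl fun m _ => ?_
        rw [sum_comm]
        exact sum_congr rfl fun n _ => sum_congr rfl fun v _ => by ring
    _ = Fintype.card R * ∑ m, x m * conj (x m) := by
        simp only [sum_apply_mul_mul_conj_apply_mul hψ, he.eq_iff]
        simp [mul_sum, mul_comm]

end AddChar

theorem gabor_periodization_estimate_general (L M b : ℕ) [NeZero L] (hM : 0 < M)
    (hL : L = M * b) (g : ZMod L → ℂ)
    (x : Fin M → ℂ)
    (h : ZMod L → ℂ)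
    (hh : ∀ t : ZMod L, h t = (1 / (L : ℂ)) *
        (∑ m : Fin M, x m * Complex.exp (2 * Real.pi * I * m * (t.val : ℂ) / M)) * g t) :
    (L : ℝ) * ∑ t : ZMod L, ‖h t‖ ^ 2
      ≥ (1 / (b : ℝ)) * Finset.univ.inf'
          (⟨⟨0, hM⟩, Finset.mem_univ _⟩ : (Finset.univ : Finset (Fin M)).Nonempty)
          (fun u : Fin M => ∑ k : Fin b,
            ‖g (((u : ℕ) : ZMod L) - ((k : ℕ) : ZMod L) * (M : ZMod L))‖ ^ 2) *
        ∑ m : Fin M, ‖x m‖ ^ 2 := by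
  subst hL
  have : NeZero M := ⟨hM.ne'⟩
  have hb : (b : ℝ) ≠ 0 := Nat.cast_ne_zero.mpr (right_ne_zero_of_mul (NeZero.ne (M * b)))
  set G : Fin M → ℝ := fun u => ∑ k : Fin b, ‖g ((u : ℕ) - (k : ℕ) * M)‖ ^ 2
  set c := Finset.univ.inf' ⟨⟨0, hM⟩, Finset.mem_univ _⟩ G
  set P : ZMod M → ℂ := fun v => ∑ m : Fin M, x m * ZMod.stdAddChar (((m : ℕ) : ZMod M) * v)
  have hfiber : ∀ (u : Fin M) (k : Fin b), h ((u : ℕ) - (k : ℕ) * M) =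
      P (u : ℕ) * g ((u : ℕ) - (k : ℕ) * M) / (M * b : ℕ) := fun u k => by
    simp only [hh, ZMod.exp_eq_stdAddChar, ZMod.natCast_val_natCast_sub_natCast_mul, P]
    ring
  have hsum : ∑ t, ‖h t‖ ^ 2 = ∑ u : Fin M, ‖P (u : ℕ)‖ ^ 2 * G u / (M * b : ℕ) ^ 2 := by
    simp only [ZMod.sum_eq_sum_fin_sum_fin_natCast_sub_natCast_mul, hfiber, norm_div, norm_mul,
      Complex.norm_natCast, div_pow, mul_pow, G, mul_sum, sum_div]
  have hparseval : ∑ u : Fin M, ‖P (u : ℕ)‖ ^ 2 = M * ∑ m, ‖x m‖ ^ 2 := by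
    rw [ZMod.sum_fin_natCast (fun v => ‖P v‖ ^ 2),
      AddChar.sum_norm_sq_sum_mul_apply_mul (ZMod.isPrimitive_stdAddChar M)
        ZMod.injective_fin_natCast, ZMod.card]
  have hmin : c * ∑ u : Fin M, ‖P (u : ℕ)‖ ^ 2 ≤ ∑ u : Fin M, ‖P (u : ℕ)‖ ^ 2 * G u := by
    rw [mul_sum]
    exact sum_le_sum fun u _ => by
      rw [mul_comm]; exact mul_le_mul_of_nonneg_left (inf'_le G (mem_univ u)) (by positivity)
  calc 1 / (b : ℝ) * c * ∑ m, ‖x m‖ ^ 2 = c * (∑ u : Fin M, ‖P (u : ℕ)‖ ^ 2) / (M * b : ℕ) := by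
        rw [hparseval]; push_cast; field_simp
    _ ≤ (∑ u : Fin M, ‖P (u : ℕ)‖ ^ 2 * G u) / (M * b : ℕ) := by gcongr
    _ = (M * b : ℕ) * ∑ t, ‖h t‖ ^ 2 := by rw [hsum, ← sum_div]; field_simp

/-- Key periodization estimate: if the window `g : ℤ/Lℤ → ℂ` satisfies
`K_g = (1/b) min_t ∑_k |g[t+kM]|² > 0`, then for `h[t] = (1/L)(∑_m x[m] e^{2πimt/M}) g[t]`,
`L‖h‖² ≥ (1/b) min_u (∑_k |g[u−kM]|²) ‖x‖²`. -/
theorem gabor_periodization_estimate (L M b : ℕ) [NeZero L] (hM : 0 < M) (hb : 0 < b)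
    (hL : L = M * b) (g : ZMod L → ℂ)
    (hKg : 0 < (1 / (b : ℝ)) * Finset.univ.inf'
        (⟨⟨0, hM⟩, Finset.mem_univ _⟩ : (Finset.univ : Finset (Fin M)).Nonempty)
        (fun t : Fin M => ∑ k : Fin b, ‖g (((t : ℕ) : ZMod L) + ((k : ℕ) : ZMod L) * (M : ZMod L))‖ ^ 2))
    (x : Fin M → ℂ)
    (h : ZMod L → ℂ)
    (hh : ∀ t : ZMod L, h t = (1 / (L : ℂ)) *
        (∑ m : Fin M, x m * Complex.exp (2 * Real.pi * I * m * (t.val : ℂ) / M)) * g t) :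
    (L : ℝ) * ∑ t : ZMod L, ‖h t‖ ^ 2
      ≥ (1 / (b : ℝ)) * Finset.univ.inf'
          (⟨⟨0, hM⟩, Finset.mem_univ _⟩ : (Finset.univ : Finset (Fin M)).Nonempty)
          (fun u : Fin M => ∑ k : Fin b,
            ‖g (((u : ℕ) : ZMod L) - ((k : ℕ) : ZMod L) * (M : ZMod L))‖ ^ 2) *
        ∑ m : Fin M, ‖x m‖ ^ 2 :=
  gabor_periodization_estimate_general L M b hM hL g x h hh
end

section
/- Under the assumption K_g := (1/b)·min_{t∈{0,…,M−1}} ∑_{k=0}^{b−1} |g[t+kM]|² > 0, the covariance matrix C_G[m,m'] = ∑_{ν} (S_Z[ν−δ] + σ₀²) · conj(ĝ[ν−mb]) ĝ[ν−m'b] satisfies ⟨C_G x, x⟩ ≥ σ₀² K_g ‖x‖² for all x ∈ ℂ^M, and is therefore invertible. -/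
/-!
For `x ∈ ℂ^M` put `F ν = ∑ₘ x m · ĝ (ν - m b)`. The quadratic form of `C_G` is
`∑_ν (S (ν - δ) + σ₀²) |F ν|² ≥ σ₀² ∑_ν |F ν|²`, and `F` is the DFT of `t ↦ X t · g t` with
`X t = ∑ₘ x m · e^{2πi m t / M}`, which is `M`-periodic. Parseval on `ℤ/Lℤ` turns `∑ |F|²` into
`L ∑_t |X t|² |g t|²`; splitting `t = r + k M`, the sum over `k` of `|g (r + k M)|²` is at least
`b K_g`, and Parseval on `ℤ/Mℤ` gives `∑_r |X r|² = M ‖x‖²`. Hence `⟨C_G x, x⟩ ≥ σ₀² L² K_g ‖x‖²`.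
-/

open Complex Finset ZMod Matrix ComplexConjugate

lemma sum_norm_sq_sum_mul_of_orthogonal {ι κ : Type*} [Fintype ι] [Fintype κ] [DecidableEq ι]
    (e : ι → κ → ℂ) (c : ℝ)
    (he : ∀ i j, ∑ k, conj (e i k) * e j k = if i = j then (c : ℂ) else 0) (a : ι → ℂ) :
    ∑ k, ‖∑ i, a i * e i k‖ ^ 2 = c * ∑ i, ‖a i‖ ^ 2 := by
  suffices h : ∑ k, ((‖∑ i, a i * e i k‖ ^ 2 : ℝ) : ℂ) = c * ∑ i, ((‖a i‖ ^ 2 : ℝ) : ℂ) by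
    exact_mod_cast h
  calc ∑ k, ((‖∑ i, a i * e i k‖ ^ 2 : ℝ) : ℂ)
      = ∑ i, ∑ j, conj (a i) * a j * ∑ k, conj (e i k) * e j k := by
        simp only [ofReal_pow, ← conj_mul', map_sum, map_mul, sum_mul, mul_sum]
        rw [← sum_comm_cycle, sum_comm]
        exact sum_congr rfl fun i _ => sum_congr rfl fun j _ => sum_congr rfl fun k _ => by ring
    _ = c * ∑ i, ((‖a i‖ ^ 2 : ℝ) : ℂ) := by
        rw [mul_sum]
        refine sum_congr rfl fun i _ => ?_
        simp [he, conj_mul']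
        ring

namespace Matrix

variable {ι κ : Type*} [Fintype ι] [Fintype κ]

lemma star_dotProduct_mulVec_of_eq_sum (w : κ → ℝ) (u : ι → κ → ℂ) {C : Matrix ι ι ℂ}
    (hC : ∀ i j, C i j = ∑ k, (w k : ℂ) * conj (u i k) * u j k) (x : ι → ℂ) :
    star x ⬝ᵥ C *ᵥ x = ∑ k, ((w k * ‖∑ i, x i * u i k‖ ^ 2 : ℝ) : ℂ) := by
  simp only [dotProduct, mulVec, hC, Pi.star_apply, star_def, ofReal_mul, ofReal_pow,
    ← conj_mul', map_sum, map_mul, sum_mul, mul_sum]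
  rw [sum_comm_cycle]
  refine sum_congr rfl fun k _ => ?_
  rw [sum_comm]
  exact sum_congr rfl fun j _ => sum_congr rfl fun i _ => by ring

lemma mul_sum_norm_sq_le_re_star_dotProduct_mulVec {w : κ → ℝ} {c : ℝ} (hw : ∀ k, c ≤ w k)
    (u : ι → κ → ℂ) {C : Matrix ι ι ℂ}
    (hC : ∀ i j, C i j = ∑ k, (w k : ℂ) * conj (u i k) * u j k) (x : ι → ℂ) :
    c * ∑ k, ‖∑ i, x i * u i k‖ ^ 2 ≤ (star x ⬝ᵥ C *ᵥ x).re := by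
  rw [star_dotProduct_mulVec_of_eq_sum w u hC, re_sum, mul_sum]
  exact sum_le_sum fun k _ => by
    rw [ofReal_re]; exact mul_le_mul_of_nonneg_right (hw k) (sq_nonneg _)

lemma isUnit_of_mul_sum_norm_sq_le_re [DecidableEq ι] {C : Matrix ι ι ℂ} {c : ℝ} (hc : 0 < c)
    (h : ∀ x : ι → ℂ, c * ∑ i, ‖x i‖ ^ 2 ≤ (star x ⬝ᵥ C *ᵥ x).re) : IsUnit C := by
  rw [← mulVec_injective_iff_isUnit]
  intro x y hxy
  have hzero : ∑ i, ‖(x - y) i‖ ^ 2 = 0 := by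
    have h' := h (x - y)
    rw [mulVec_sub, hxy, sub_self, dotProduct_zero, zero_re] at h'
    exact le_antisymm (nonpos_of_mul_nonpos_right h' hc) (by positivity)
  rw [sum_eq_zero_iff_of_nonneg fun i _ => by positivity] at hzero
  exact sub_eq_zero.1 (funext fun i => by simpa using hzero i (mem_univ i))

end Matrix

namespace ZMod

variable {N : ℕ} [NeZero N]

lemma sum_conj_stdAddChar_mul_mul {ι : Type*} [DecidableEq ι] {a : ι → ZMod N}
    (ha : Function.Injective a) (i j : ι) :
    ∑ s, conj (stdAddChar (a i * s)) * stdAddChar (a j * s) = if i = j then (N : ℂ) else 0 := by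
  simp_rw [← AddChar.map_neg_eq_conj, ← AddChar.map_add_eq_mul,
    show ∀ s, -(a i * s) + a j * s = s * (a j - a i) from fun s => by ring]
  rw [AddChar.sum_mulShift _ (isPrimitive_stdAddChar N), ZMod.card]
  simp [sub_eq_zero, ha.eq_iff, eq_comm]

lemma sum_norm_sq_dft (Φ : ZMod N → ℂ) : ∑ k, ‖𝓕 Φ k‖ ^ 2 = N * ∑ j, ‖Φ j‖ ^ 2 := by
  have h := sum_norm_sq_sum_mul_of_orthogonal (fun j k => stdAddChar (-j * k)) N
    (sum_conj_stdAddChar_mul_mul neg_injective) Φ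
  simpa [dft_apply, mul_comm] using h

lemma dft_apply_eq_sum_exp (Φ : ZMod N → ℂ) (k : ZMod N) :
    𝓕 Φ k = ∑ j, Φ j * exp (-(2 * Real.pi * I * k.val * j.val / N)) := by
  rw [dft_apply]
  refine sum_congr rfl fun j _ => ?_
  have h : -(j * k) = ((-((k.val : ℤ) * j.val) : ℤ) : ZMod N) := by
    push_cast
    rw [natCast_zmod_val, natCast_zmod_val, mul_comm]
  rw [smul_eq_mul, mul_comm, h, stdAddChar_coe]
  push_cast
  ring_nf

lemma dft_stdAddChar_mul (a : ZMod N) (Φ : ZMod N → ℂ) (k : ZMod N) :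
    𝓕 (fun j => stdAddChar (a * j) * Φ j) k = 𝓕 Φ (k - a) := by
  simp only [dft_apply, smul_eq_mul, ← mul_assoc, ← AddChar.map_add_eq_mul]
  exact sum_congr rfl fun j _ => by ring_nf

lemma sum_mul_dft_sub {ι : Type*} [Fintype ι] (c : ι → ℂ) (a : ι → ZMod N) (Φ : ZMod N → ℂ)
    (k : ZMod N) :
    ∑ i, c i * 𝓕 Φ (k - a i) = 𝓕 (fun j => (∑ i, c i * stdAddChar (a i * j)) * Φ j) k := by
  simp_rw [← dft_stdAddChar_mul, dft_apply, smul_eq_mul, mul_sum, sum_mul]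
  rw [sum_comm]
  exact sum_congr rfl fun j _ => by rw [mul_sum]; exact sum_congr rfl fun i _ => by ring

lemma natCast_fin_bijective (n : ℕ) [NeZero n] :
    Function.Bijective (fun i : Fin n => ((i : ℕ) : ZMod n)) := by
  obtain ⟨m, rfl⟩ := Nat.exists_eq_succ_of_ne_zero (NeZero.ne n)
  exact (funext Fin.cast_val_eq_self : (fun i : Fin (m + 1) => ((i : ℕ) : ZMod (m + 1))) = id) ▸
    Function.bijective_id

lemma natCast_add_mul_bijective (M b : ℕ) [NeZero (M * b)] :
    Function.Bijective
      (fun p : Fin M × Fin b => ((p.1 : ℕ) : ZMod (M * b)) + ((p.2 : ℕ) : ZMod (M * b)) * M) := by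
  have hM : 0 < M := Nat.pos_of_ne_zero (left_ne_zero_of_mul (NeZero.ne (M * b)))
  refine (Fintype.bijective_iff_injective_and_card _).2 ⟨?_, by simp [ZMod.card]⟩
  rintro ⟨r, k⟩ ⟨r', k'⟩ h
  have hlt : ∀ (r : Fin M) (k : Fin b), (r : ℕ) + k * M < M * b := fun r k => by
    nlinarith [r.2, k.2]
  simp only [← Nat.cast_mul, ← Nat.cast_add, natCast_eq_natCast_iff',
    Nat.mod_eq_of_lt (hlt _ _)] at h
  have hr : (r : ℕ) = r' := by
    simpa [Nat.add_mul_mod_self_right, Nat.mod_eq_of_lt r.2, Nat.mod_eq_of_lt r'.2]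
      using congrArg (· % M) h
  have hk : (k : ℕ) = k' := Nat.eq_of_mul_eq_mul_right hM (by omega)
  simp [Fin.ext hr, Fin.ext hk]

lemma sum_eq_sum_fin {R : Type*} [AddCommMonoid R] (n : ℕ) [NeZero n] (f : ZMod n → R) :
    ∑ s, f s = ∑ i : Fin n, f (i : ℕ) :=
  (Fintype.sum_bijective _ (natCast_fin_bijective n) _ _ fun _ => rfl).symm

lemma sum_eq_sum_fin_sum_fin {R : Type*} [AddCommMonoid R] (M b : ℕ) [NeZero (M * b)]
    (f : ZMod (M * b) → R) :
    ∑ t, f t = ∑ r : Fin M, ∑ k : Fin b, f ((r : ℕ) + (k : ℕ) * M) := by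
  rw [← Fintype.sum_prod_type']
  exact (Fintype.sum_bijective _ (natCast_add_mul_bijective M b) _ _ fun _ => rfl).symm

lemma stdAddChar_natCast_mul_natCast (M b n : ℕ) [NeZero M] [NeZero (M * b)] :
    stdAddChar ((n : ZMod (M * b)) * (b : ZMod (M * b))) = stdAddChar (n : ZMod M) := by
  have hb : (b : ℂ) ≠ 0 := by exact_mod_cast right_ne_zero_of_mul (NeZero.ne (M * b))
  rw [← Nat.cast_mul, stdAddChar_apply, stdAddChar_apply, toCircle_natCast, toCircle_natCast]
  congr 1
  push_cast
  field_simp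

lemma stdAddChar_natCast_mul_mul (M b n : ℕ) [NeZero M] [NeZero (M * b)] (t : ZMod (M * b)) :
    stdAddChar ((n : ZMod (M * b)) * (b : ZMod (M * b)) * t) =
      stdAddChar ((n : ZMod M) * castHom (dvd_mul_right M b) (ZMod M) t) := by
  have h := stdAddChar_natCast_mul_natCast M b (n * t.val)
  push_cast at h
  rwa [← natCast_zmod_val t, map_natCast, mul_right_comm]

lemma castHom_natCast_add_mul (M b r k : ℕ) :
    castHom (dvd_mul_right M b) (ZMod M) ((r : ZMod (M * b)) + (k : ZMod (M * b)) * M) = r := by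
  simp

lemma mul_sum_le_sum_castHom_mul (M b : ℕ) [NeZero M] [NeZero (M * b)] {X : ZMod M → ℝ}
    {w : ZMod (M * b) → ℝ} {c : ℝ} (hX : ∀ s, 0 ≤ X s)
    (hc : ∀ r : Fin M, c ≤ ∑ k : Fin b, w ((r : ℕ) + (k : ℕ) * M)) :
    c * ∑ s, X s ≤ ∑ t, X (castHom (dvd_mul_right M b) (ZMod M) t) * w t := by
  rw [sum_eq_sum_fin, sum_eq_sum_fin_sum_fin, mul_sum]
  refine sum_le_sum fun r _ => ?_
  simp only [castHom_natCast_add_mul, ← mul_sum]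
  rw [mul_comm]
  exact mul_le_mul_of_nonneg_left (hc r) (hX _)

lemma sum_norm_sq_sum_mul_stdAddChar (M : ℕ) [NeZero M] (x : Fin M → ℂ) :
    ∑ s : ZMod M, ‖∑ m, x m * stdAddChar (((m : ℕ) : ZMod M) * s)‖ ^ 2 =
      M * ∑ m, ‖x m‖ ^ 2 :=
  sum_norm_sq_sum_mul_of_orthogonal _ M
    (sum_conj_stdAddChar_mul_mul (natCast_fin_bijective M).injective) x

end ZMod

lemma mul_sum_norm_sq_le_sum_norm_sq_sum_mul_dft_sub (M b : ℕ) [NeZero M] [NeZero (M * b)]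
    {g : ZMod (M * b) → ℂ} {c : ℝ}
    (hc : ∀ r : Fin M, c ≤ ∑ k : Fin b, ‖g ((r : ℕ) + (k : ℕ) * M)‖ ^ 2) (x : Fin M → ℂ) :
    (M * b : ℕ) * c * M * ∑ m, ‖x m‖ ^ 2 ≤
      ∑ ν, ‖∑ m, x m * 𝓕 g (ν - ((m : ℕ) : ZMod (M * b)) * (b : ZMod (M * b)))‖ ^ 2 := by
  set X : ZMod M → ℂ := fun s => ∑ m, x m * stdAddChar (((m : ℕ) : ZMod M) * s)
  calc (M * b : ℕ) * c * M * ∑ m, ‖x m‖ ^ 2 = (M * b : ℕ) * (c * ∑ s, ‖X s‖ ^ 2) := by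
        rw [sum_norm_sq_sum_mul_stdAddChar]; ring
    _ ≤ (M * b : ℕ) * ∑ t, ‖X (castHom (dvd_mul_right M b) (ZMod M) t)‖ ^ 2 * ‖g t‖ ^ 2 := by
        gcongr
        exact mul_sum_le_sum_castHom_mul M b (fun _ => by positivity) hc
    _ = _ := by
        simp_rw [sum_mul_dft_sub, stdAddChar_natCast_mul_mul, sum_norm_sq_dft, norm_mul, mul_pow]
        rfl

theorem gabor_covariance_invertible_general (L M b : ℕ) [NeZero L] (hM : 0 < M)
    (hL : L = M * b) (g : ZMod L → ℂ)
    (ghat : ZMod L → ℂ)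
    (hghat : ∀ ν : ZMod L, ghat ν = ∑ t : ZMod L,
        g t * Complex.exp (-(2 * Real.pi * I * (ν.val : ℂ) * (t.val : ℂ) / L)))
    (Kg : ℝ)
    (hKgdef : Kg = (1 / (b : ℝ)) * Finset.univ.inf'
        (⟨⟨0, hM⟩, Finset.mem_univ _⟩ : (Finset.univ : Finset (Fin M)).Nonempty)
        (fun t : Fin M => ∑ k : Fin b,
          ‖g (((t : ℕ) : ZMod L) + ((k : ℕ) : ZMod L) * (M : ZMod L))‖ ^ 2))
    (hKg : 0 < Kg)
    (S : ZMod L → ℝ) (hS : ∀ ν, 0 ≤ S ν) (δ : ZMod L) (σ₀ : ℝ) (hσ₀ : 0 < σ₀)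
    (CG : Matrix (Fin M) (Fin M) ℂ)
    (hCG : ∀ m m' : Fin M, CG m m' = ∑ ν : ZMod L,
        ((S (ν - δ) : ℂ) + (σ₀ : ℂ) ^ 2) *
          (starRingEnd ℂ) (ghat (ν - ((m : ℕ) : ZMod L) * (b : ZMod L))) *
          ghat (ν - ((m' : ℕ) : ZMod L) * (b : ZMod L))) :
    (∀ x : Fin M → ℂ,
        (dotProduct (star x) (CG.mulVec x)).re ≥ σ₀ ^ 2 * Kg * ∑ m, ‖x m‖ ^ 2) ∧
      IsUnit CG := by
  subst hL
  have : NeZero M := ⟨hM.ne'⟩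
  obtain rfl : ghat = 𝓕 g := funext fun ν => by rw [hghat, dft_apply_eq_sum_exp]
  have hbKg : ∀ r : Fin M, b * Kg ≤ ∑ k : Fin b, ‖g ((r : ℕ) + (k : ℕ) * M)‖ ^ 2 := fun r => by
    have hb : (b : ℝ) ≠ 0 := by exact_mod_cast right_ne_zero_of_mul (NeZero.ne (M * b))
    rw [hKgdef, ← mul_assoc, mul_one_div_cancel hb, one_mul]
    exact inf'_le _ (mem_univ r)
  have hL : (1 : ℝ) ≤ ((M * b : ℕ) : ℝ) ^ 2 :=
    one_le_pow₀ (Nat.one_le_cast.2 (Nat.one_le_iff_ne_zero.2 (NeZero.ne _)))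
  have bound : ∀ x : Fin M → ℂ, σ₀ ^ 2 * Kg * ∑ m, ‖x m‖ ^ 2 ≤ (star x ⬝ᵥ CG *ᵥ x).re :=
    fun x => calc
      σ₀ ^ 2 * Kg * ∑ m, ‖x m‖ ^ 2 ≤ ((M * b : ℕ) : ℝ) ^ 2 * (σ₀ ^ 2 * Kg * ∑ m, ‖x m‖ ^ 2) :=
        le_mul_of_one_le_left (by positivity) hL
      _ = σ₀ ^ 2 * ((M * b : ℕ) * (b * Kg) * M * ∑ m, ‖x m‖ ^ 2) := by push_cast; ring
      _ ≤ σ₀ ^ 2 * ∑ ν,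
            ‖∑ m, x m * 𝓕 g (ν - ((m : ℕ) : ZMod (M * b)) * (b : ZMod (M * b)))‖ ^ 2 := by
        gcongr
        exact mul_sum_norm_sq_le_sum_norm_sq_sum_mul_dft_sub M b hbKg x
      _ ≤ (star x ⬝ᵥ CG *ᵥ x).re :=
        mul_sum_norm_sq_le_re_star_dotProduct_mulVec (fun ν => le_add_of_nonneg_left (hS (ν - δ)))
          _ (fun m m' => by rw [hCG]; push_cast; rfl) x
  exact ⟨bound, isUnit_of_mul_sum_norm_sq_le_re (by positivity) bound⟩

/-- Lower bound and invertibility of the Gabor covariance matrix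
`C_G[m,m'] = ∑_ν (S_Z[ν−δ]+σ₀²) conj(ĝ[ν−mb]) ĝ[ν−m'b]` under the condition `K_g > 0`. -/
theorem gabor_covariance_invertible (L M b : ℕ) [NeZero L] (hM : 0 < M) (hb : 0 < b)
    (hL : L = M * b) (g : ZMod L → ℂ)
    (ghat : ZMod L → ℂ)
    (hghat : ∀ ν : ZMod L, ghat ν = ∑ t : ZMod L,
        g t * Complex.exp (-(2 * Real.pi * I * (ν.val : ℂ) * (t.val : ℂ) / L)))
    (Kg : ℝ)
    (hKgdef : Kg = (1 / (b : ℝ)) * Finset.univ.inf'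
        (⟨⟨0, hM⟩, Finset.mem_univ _⟩ : (Finset.univ : Finset (Fin M)).Nonempty)
        (fun t : Fin M => ∑ k : Fin b,
          ‖g (((t : ℕ) : ZMod L) + ((k : ℕ) : ZMod L) * (M : ZMod L))‖ ^ 2))
    (hKg : 0 < Kg)
    (S : ZMod L → ℝ) (hS : ∀ ν, 0 ≤ S ν) (δ : ZMod L) (σ₀ : ℝ) (hσ₀ : 0 < σ₀)
    (CG : Matrix (Fin M) (Fin M) ℂ)
    (hCG : ∀ m m' : Fin M, CG m m' = ∑ ν : ZMod L,
        ((S (ν - δ) : ℂ) + (σ₀ : ℂ) ^ 2) *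
          (starRingEnd ℂ) (ghat (ν - ((m : ℕ) : ZMod L) * (b : ZMod L))) *
          ghat (ν - ((m' : ℕ) : ZMod L) * (b : ZMod L))) :
    (∀ x : Fin M → ℂ,
        (dotProduct (star x) (CG.mulVec x)).re ≥ σ₀ ^ 2 * Kg * ∑ m, ‖x m‖ ^ 2) ∧
      IsUnit CG :=
  gabor_covariance_invertible_general L M b hM hL g ghat hghat Kg hKgdef hKg S hS δ σ₀ hσ₀ CG hCG
end
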